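/- Let X = (2(γ₃M₂−γ₂M₃), 2(γ₁M₃−γ₃M₁), 2(γ₂M₁−γ₁M₂), −aγ₂, aγ₁, 0) be the Lagrange vector field on ℝ⁶ with coordinates (γ₁,γ₂,γ₃,M₁,M₂,M₃), a ∈ ℝ. Define the vector fields Y = (−γ₂, γ₁, 0, −M₂, M₁, 0) and Z = (2γ₁, 2γ₂, 2γ₃, M₁, M₂, M₃). Then the Lie brackets satisfy [X, Y] = 0 and [X, Z] = −X at every point, where [X, V]_i = ∑_j ( X_j ∂V_i/∂x_j − V_j ∂X_i/∂x_j ). -/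

import Mathlib

/-!
Summed against a vector, the coordinate partial derivatives give the Fréchet derivative, so
`[X, V] = DV·X − DX·V`, which for a linear field `V` is `V(X) − DX·V`. Both `Y` and `Z` are linear:
`Y` generates the rotations about the third axis, with which `X` commutes, and `Z` generates the
weighted scalings `(γ, M) ↦ (s²γ, sM)`, under which each component of `X` has weight one more than
its coordinate. With the explicit derivative of the quadratic field `X`, both brackets reduce to
polynomial identities.
-/

noncomputable section

open scoped BigOperators

/-- Partial derivative of `f` in the `i`-th coordinate direction at `x`. -/
def pd {n : ℕ} (i : Fin n) (f : (Fin n → ℝ) → ℝ) (x : Fin n → ℝ) : ℝ :=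
  fderiv ℝ f x (Pi.single i 1)

/-- The Lagrange vector field on `ℝ⁶` with coordinates
`(x₁,…,x₆) = (γ₁,γ₂,γ₃,M₁,M₂,M₃)`. -/
def lagX (a : ℝ) (x : Fin 6 → ℝ) : Fin 6 → ℝ :=
  ![2 * (x 2 * x 4 - x 1 * x 5), 2 * (x 0 * x 5 - x 2 * x 3),
    2 * (x 1 * x 3 - x 0 * x 4), -(a * x 1), a * x 0, 0]

/-- `f₁ = γ₁² + γ₂² + γ₃²`. -/
def lagF₁ (x : Fin 6 → ℝ) : ℝ := x 0 ^ 2 + x 1 ^ 2 + x 2 ^ 2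

/-- `f₂ = γ₁M₁ + γ₂M₂ + γ₃M₃`. -/
def lagF₂ (x : Fin 6 → ℝ) : ℝ := x 0 * x 3 + x 1 * x 4 + x 2 * x 5

/-- `f₃ = M₁² + M₂² + M₃² + aγ₃`. -/
def lagF₃ (a : ℝ) (x : Fin 6 → ℝ) : ℝ := x 3 ^ 2 + x 4 ^ 2 + x 5 ^ 2 + a * x 2

/-- `f₄ = M₃`. -/
def lagF₄ (x : Fin 6 → ℝ) : ℝ := x 5

/-- The vector field `Y = (−γ₂, γ₁, 0, −M₂, M₁, 0)`. -/
def lagY (x : Fin 6 → ℝ) : Fin 6 → ℝ :=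
  ![-(x 1), x 0, 0, -(x 4), x 3, 0]

/-- The vector field `Z = (2γ₁, 2γ₂, 2γ₃, M₁, M₂, M₃)`. -/
def lagZ (x : Fin 6 → ℝ) : Fin 6 → ℝ :=
  ![2 * x 0, 2 * x 1, 2 * x 2, x 3, x 4, x 5]

/-- The Lie bracket of vector fields: `[X,V]_i = ∑_j (X_j ∂V_i/∂x_j − V_j ∂X_i/∂x_j)`. -/
def vecLie {n : ℕ} (X V : (Fin n → ℝ) → Fin n → ℝ) (x : Fin n → ℝ) (i : Fin n) : ℝ :=
  ∑ j, (X x j * pd j (fun y => V y i) x - V x j * pd j (fun y => X y i) x)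

section CoordinateLieBracket

variable {n : ℕ}

theorem sum_mul_pd (f : (Fin n → ℝ) → ℝ) (x v : Fin n → ℝ) :
    ∑ j, v j * pd j f x = fderiv ℝ f x v := by
  conv_rhs => rw [← Finset.univ_sum_single v]
  rw [map_sum]
  refine Finset.sum_congr rfl fun j _ => ?_
  rw [pd, ← smul_eq_mul, ← map_smul, ← Pi.single_smul', smul_eq_mul, mul_one]

theorem vecLie_eq_fderiv (X V : (Fin n → ℝ) → Fin n → ℝ) (x : Fin n → ℝ) (i : Fin n) :
    vecLie X V x i =
      fderiv ℝ (fun y => V y i) x (X x) - fderiv ℝ (fun y => X y i) x (V x) := by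
  rw [vecLie, Finset.sum_sub_distrib, sum_mul_pd, sum_mul_pd]

theorem fderiv_apply_of_isLinearMap {V : (Fin n → ℝ) → Fin n → ℝ} (hV : IsLinearMap ℝ V)
    (x w : Fin n → ℝ) (i : Fin n) : fderiv ℝ (fun y => V y i) x w = V w i :=
  let L : (Fin n → ℝ) →L[ℝ] ℝ :=
    (ContinuousLinearMap.proj i).comp (LinearMap.toContinuousLinearMap (hV.mk' V))
  congrArg (· w) L.fderiv

theorem vecLie_of_isLinearMap (X : (Fin n → ℝ) → Fin n → ℝ) {V : (Fin n → ℝ) → Fin n → ℝ}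
    (hV : IsLinearMap ℝ V) (x : Fin n → ℝ) (i : Fin n) :
    vecLie X V x i = V (X x) i - fderiv ℝ (fun y => X y i) x (V x) := by
  rw [vecLie_eq_fderiv, fderiv_apply_of_isLinearMap hV]

theorem fderiv_apply_coord (x w : Fin n → ℝ) (k : Fin n) :
    fderiv ℝ (fun y : Fin n → ℝ => y k) x w = w k := by
  rw [(hasFDerivAt_apply k x).fderiv]
  rfl

end CoordinateLieBracket

theorem isLinearMap_lagY : IsLinearMap ℝ lagY where
  map_add x y := by
    ext i; fin_cases i <;> simp only [lagY, Fin.isValue, Fin.zero_eta, Fin.mk_one, Fin.reduceFinMk,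
      Matrix.cons_val_zero, Matrix.cons_val_one, Matrix.cons_val, Pi.add_apply] <;> ring
  map_smul c x := by
    ext i; fin_cases i <;> simp only [lagY, Fin.isValue, Fin.zero_eta, Fin.mk_one, Fin.reduceFinMk,
      Matrix.cons_val_zero, Matrix.cons_val_one, Matrix.cons_val, Pi.smul_apply, smul_eq_mul] <;> ring

theorem isLinearMap_lagZ : IsLinearMap ℝ lagZ where
  map_add x y := by
    ext i; fin_cases i <;> simp only [lagZ, Fin.isValue, Fin.zero_eta, Fin.mk_one, Fin.reduceFinMk,
      Matrix.cons_val_zero, Matrix.cons_val_one, Matrix.cons_val, Pi.add_apply] <;> ring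
  map_smul c x := by
    ext i; fin_cases i <;> simp only [lagZ, Fin.isValue, Fin.zero_eta, Fin.mk_one, Fin.reduceFinMk,
      Matrix.cons_val_zero, Matrix.cons_val_one, Matrix.cons_val, Pi.smul_apply, smul_eq_mul] <;> ring

def lagXDeriv (a : ℝ) (x w : Fin 6 → ℝ) : Fin 6 → ℝ :=
  ![2 * (w 2 * x 4 + x 2 * w 4 - w 1 * x 5 - x 1 * w 5),
    2 * (w 0 * x 5 + x 0 * w 5 - w 2 * x 3 - x 2 * w 3),
    2 * (w 1 * x 3 + x 1 * w 3 - w 0 * x 4 - x 0 * w 4), -(a * w 1), a * w 0, 0]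

theorem fderiv_lagX_apply (a : ℝ) (x w : Fin 6 → ℝ) (i : Fin 6) :
    fderiv ℝ (fun y => lagX a y i) x w = lagXDeriv a x w i := by
  fin_cases i <;>
    simp (disch := fun_prop) only [lagX, lagXDeriv, Fin.isValue, Fin.zero_eta, Fin.mk_one,
      Fin.reduceFinMk, Matrix.cons_val_zero, Matrix.cons_val_one, Matrix.cons_val, fderiv_fun_mul,
      fderiv_fun_sub, fderiv_fun_neg, fderiv_fun_const, fderiv_apply_coord, Pi.zero_apply,
      zero_apply, add_apply, sub_apply, neg_apply, smul_apply, smul_eq_mul] <;>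
    ring

theorem vecLie_lagX_lagY (a : ℝ) (x : Fin 6 → ℝ) (i : Fin 6) :
    vecLie (lagX a) lagY x i = 0 := by
  rw [vecLie_of_isLinearMap _ isLinearMap_lagY, fderiv_lagX_apply]
  fin_cases i <;> simp only [lagX, lagY, lagXDeriv, Fin.isValue, Fin.zero_eta, Fin.mk_one,
    Fin.reduceFinMk, Matrix.cons_val_zero, Matrix.cons_val_one, Matrix.cons_val] <;> ring

theorem vecLie_lagX_lagZ (a : ℝ) (x : Fin 6 → ℝ) (i : Fin 6) :
    vecLie (lagX a) lagZ x i = -lagX a x i := by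
  rw [vecLie_of_isLinearMap _ isLinearMap_lagZ, fderiv_lagX_apply]
  fin_cases i <;> simp only [lagX, lagZ, lagXDeriv, Fin.isValue, Fin.zero_eta, Fin.mk_one,
    Fin.reduceFinMk, Matrix.cons_val_zero, Matrix.cons_val_one, Matrix.cons_val] <;> ring

/-- For the Lagrange vector field `X`: `[X, Y] = 0` and `[X, Z] = −X`. -/
theorem lagrange_symmetry_fields (a : ℝ) (x : Fin 6 → ℝ) (i : Fin 6) :
    vecLie (lagX a) (fun y => lagY y) x i = 0 ∧
    vecLie (lagX a) (fun y => lagZ y) x i = -(lagX a x i) :=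
  ⟨vecLie_lagX_lagY a x i, vecLie_lagX_lagZ a x i⟩
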